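/- With the boundary operator ∂ of Proposition propboundary, the kernel of the restriction of ∂ to Γ(T) ≅ R^A equals the image of the antisymmetric matrix Ω_π. Consequently dim ker(∂|_{Γ(T)}) = 2g and in combination with the surjectivity onto R_0^Σ one recovers the relation d = 2g + s − 1, where s = |Σ| and 2g = rank(Ω_π). -/

import Mathlib

/-!
Let `D f α = f (γ (πt α + 1)) - f (γ (πt α))`, where `f` is a function on the cycles and `γ i` is
the cycle of the top vertex `u_i`. Summation by parts shows that `∂` is the transpose of `D`, so
`ker ∂ = (im D)ᗮ`. The `α`-th entry of `Ω_π χ` is the difference of the bottom and the top partial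
sums of `χ` before `α`. Hence `Ω_π χ = 0` exactly when these partial sums, read as values at the
top and bottom vertices, glue to a `σ`-invariant function on `S`, i.e. to a function `f` on the
cycles, and then `D f = χ`. So `ker Ω_π = im D`, and as `Ω_π` is antisymmetric,
`im Ω_π = (ker Ω_π)ᗮ = (im D)ᗮ = ker ∂`. Finally a `σ`-invariant function whose top differences
vanish is constant, so `ker D` is the line of constants and `d - rank Ω_π = dim im D = s - 1`.
-/

open Finset

lemma Function.exists_comp_eq_of_agree {ι S β : Type*} [Nonempty β] {U V : ι → S}
    (hU : Function.Injective U) (hV : Function.Injective V) {F G : ι → β}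
    (h : ∀ i j, U i = V j → F i = G j) :
    ∃ g : S → β, (∀ i, g (U i) = F i) ∧ ∀ j, g (V j) = G j := by
  refine ⟨Function.extend U F (Function.extend V G fun _ => Classical.arbitrary β),
    hU.extend_apply _ _, fun j => ?_⟩
  by_cases hj : ∃ i, U i = V j
  · obtain ⟨i, hi⟩ := hj
    rw [← hi, hU.extend_apply, h i j hi]
  · rw [Function.extend_apply' _ _ _ hj, hV.extend_apply]

lemma Equiv.Perm.SameCycle.apply_eq_of_invariant {α β : Type*} {σ : Equiv.Perm α} {g : α → β}
    (hg : ∀ s, g (σ s) = g s) {s t : α} (h : σ.SameCycle s t) : g s = g t := by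
  obtain ⟨i, rfl⟩ := h
  induction i using Int.induction_on generalizing s with
  | zero => simp
  | succ n ih => rw [zpow_add_one, Perm.mul_apply, ← ih, hg]
  | pred n ih => rw [zpow_sub_one, Perm.mul_apply, ← ih, ← hg (σ⁻¹ s), Perm.coe_inv,
      apply_symm_apply]

lemma Equiv.Perm.exists_comp_eq_of_invariant {S Cyc β : Type*} [Nonempty β] {σ : Equiv.Perm S}
    {c : S → Cyc} (hc : ∀ s t, c s = c t → σ.SameCycle s t) {g : S → β}
    (hg : ∀ s, g (σ s) = g s) : ∃ f : Cyc → β, f ∘ c = g :=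
  ⟨Function.extend c g fun _ => Classical.arbitrary β,
    funext <| Function.FactorsThrough.extend_apply
      (fun s t hst => (hc s t hst).apply_eq_of_invariant hg) _⟩

open Matrix

theorem Matrix.mem_range_mulVecLin_iff {m n : Type*} [Fintype m] [Fintype n] (M : Matrix m n ℝ)
    (χ : m → ℝ) : χ ∈ LinearMap.range M.mulVecLin ↔ ∀ ψ, Mᵀ *ᵥ ψ = 0 → χ ⬝ᵥ ψ = 0 := by
  classical
  have key : LinearMap.range (toEuclideanLin M) = (LinearMap.ker (toEuclideanLin Mᵀ))ᗮ := by
    rw [← conjTranspose_eq_transpose_of_trivial, toEuclideanLin_conjTranspose_eq_adjoint,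
      ← LinearMap.orthogonal_range, Submodule.orthogonal_orthogonal]
  have hrange : χ ∈ LinearMap.range M.mulVecLin ↔
      WithLp.toLp 2 χ ∈ LinearMap.range (toEuclideanLin M) := by
    simp only [LinearMap.mem_range, mulVecLin_apply, toLpLin_apply,
      (WithLp.toLp_injective 2).eq_iff]
    exact ⟨fun ⟨v, hv⟩ => ⟨WithLp.toLp 2 v, hv⟩, fun ⟨v, hv⟩ => ⟨v.ofLp, hv⟩⟩
  rw [hrange, key, Submodule.mem_orthogonal']
  simp only [LinearMap.mem_ker, toLpLin_apply, WithLp.toLp_eq_zero,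
    EuclideanSpace.inner_eq_star_dotProduct, star_trivial, dotProduct_comm _ χ]
  exact ⟨fun h ψ hψ => h (WithLp.toLp 2 ψ) hψ, fun h ψ hψ => h ψ.ofLp hψ⟩

section PartialSums

variable {A M : Type*} [AddCommGroup M] {d : ℕ} (e : A ≃ Fin d)

def partialSum [Fintype A] (χ : A → M) (k : ℕ) : M := ∑ β with (e β : ℕ) < k, χ β

def edgeDiff (G : Fin (d + 1) → M) : A → M := fun α => G (e α).succ - G (e α).castSucc

@[simp]
lemma partialSum_zero [Fintype A] (χ : A → M) : partialSum e χ 0 = 0 := by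
  simp [partialSum]

lemma partialSum_succ [Fintype A] (χ : A → M) (p : Fin d) :
    partialSum e χ (p + 1) = partialSum e χ p + χ (e.symm p) := by
  classical
  have : univ.filter (fun β => (e β : ℕ) < p + 1) =
      insert (e.symm p) (univ.filter fun β => (e β : ℕ) < p) := by
    ext β
    simp only [mem_filter, mem_univ, true_and, mem_insert, Equiv.eq_symm_apply, Fin.ext_iff]
    omega
  rw [partialSum, this, sum_insert (by simp), add_comm]
  rfl

lemma partialSum_self [Fintype A] (χ : A → M) : partialSum e χ d = ∑ β, χ β := by
  simp [partialSum]

lemma partialSum_edgeDiff [Fintype A] (G : Fin (d + 1) → M) (i : Fin (d + 1)) :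
    partialSum e (edgeDiff e G) i = G i - G 0 := by
  induction i using Fin.induction with
  | zero => simp
  | succ p ih =>
    rw [Fin.val_succ, partialSum_succ, ← Fin.val_castSucc, ih, edgeDiff, Equiv.apply_symm_apply]
    abel

lemma edgeDiff_partialSum [Fintype A] (χ : A → M) :
    edgeDiff e (fun i => partialSum e χ i) = χ := by
  funext α
  simp [edgeDiff, partialSum_succ]

lemma edgeDiff_eq_zero_iff (G : Fin (d + 1) → M) : edgeDiff e G = 0 ↔ ∀ i, G i = G 0 := by
  refine ⟨fun h i => ?_, fun h => funext fun α => by simp [edgeDiff, h]⟩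
  induction i using Fin.induction with
  | zero => rfl
  | succ p ih =>
    have hp := congrFun h (e.symm p)
    rwa [edgeDiff, Equiv.apply_symm_apply, Pi.zero_apply, sub_eq_zero, ih] at hp

end PartialSums

section CrossingMatrix

variable {A : Type*} {d : ℕ} (e f : A ≃ Fin d)

def crossingMatrix : Matrix A A ℝ := fun α β =>
  if e α < e β ∧ f β < f α then 1 else if e β < e α ∧ f α < f β then -1 else 0

lemma crossingMatrix_transpose : (crossingMatrix e f)ᵀ = -crossingMatrix e f := by
  ext α β
  rw [transpose_apply, neg_apply]
  unfold crossingMatrix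
  split_ifs <;> grind

lemma crossingMatrix_mul_apply (χ : A → ℝ) (α β : A) :
    crossingMatrix e f α β * χ β =
      (if f β < f α then χ β else 0) - (if e β < e α then χ β else 0) := by
  rcases eq_or_ne α β with rfl | hne
  · simp [crossingMatrix]
  rcases (e.injective.ne hne).lt_or_gt with he | he <;>
    rcases (f.injective.ne hne).lt_or_gt with hf | hf <;>
    simp [crossingMatrix, he, hf, he.not_gt, hf.not_gt]

lemma crossingMatrix_mulVec_apply [Fintype A] (χ : A → ℝ) (α : A) :
    (crossingMatrix e f *ᵥ χ) α = partialSum f χ (f α) - partialSum e χ (e α) := by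
  simp only [mulVec, dotProduct, crossingMatrix_mul_apply, sum_sub_distrib, partialSum,
    sum_filter, Fin.lt_def]

lemma crossingMatrix_mulVec_eq_zero_iff [Fintype A] (χ : A → ℝ) :
    crossingMatrix e f *ᵥ χ = 0 ↔ ∀ α, partialSum e χ (e α) = partialSum f χ (f α) := by
  simp only [funext_iff, crossingMatrix_mulVec_apply, Pi.zero_apply, sub_eq_zero]
  exact forall_congr' fun α => eq_comm

end CrossingMatrix

section VertexPermutation

variable {A S : Type*} {d : ℕ} {πt πb : A ≃ Fin d} {U V : Fin (d + 1) → S} {σ : Equiv.Perm S}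

lemma edgeDiff_comp_eq_of_invariant {M : Type*} [AddCommGroup M]
    (hσ1 : ∀ p : Fin d, σ (U p.castSucc) = V (Fin.castSucc (πb (πt.symm p))))
    (hσ2 : ∀ p : Fin d, σ (V p.succ) = U (Fin.succ (πt (πb.symm p))))
    {g : S → M} (hg : ∀ s, g (σ s) = g s) :
    edgeDiff πt (g ∘ U) = edgeDiff πb (g ∘ V) := by
  funext α
  have hsucc : g (U (πt α).succ) = g (V (πb α).succ) := by
    rw [← hg (V _), hσ2, Equiv.symm_apply_apply]
  have hcastSucc : g (U (πt α).castSucc) = g (V (πb α).castSucc) := by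
    rw [← hg (U _), hσ1, Equiv.symm_apply_apply]
  simp only [edgeDiff, Function.comp_apply, hsucc, hcastSucc]

lemma crossingMatrix_mulVec_edgeDiff_eq_zero [Fintype A] (hUV0 : U 0 = V 0)
    (hσ1 : ∀ p : Fin d, σ (U p.castSucc) = V (Fin.castSucc (πb (πt.symm p))))
    (hσ2 : ∀ p : Fin d, σ (V p.succ) = U (Fin.succ (πt (πb.symm p))))
    {g : S → ℝ} (hg : ∀ s, g (σ s) = g s) :
    crossingMatrix πt πb *ᵥ edgeDiff πt (g ∘ U) = 0 := by
  rw [crossingMatrix_mulVec_eq_zero_iff]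
  intro α
  nth_rw 2 [edgeDiff_comp_eq_of_invariant hσ1 hσ2 hg]
  rw [← Fin.val_castSucc, partialSum_edgeDiff, ← Fin.val_castSucc, partialSum_edgeDiff]
  simp only [Function.comp_apply, hUV0, ← hg (U _), hσ1, Equiv.symm_apply_apply]

lemma exists_eq_castSucc_or_eq_succ (hd : d ≠ 0) (hUV0 : U 0 = V 0)
    (hUVd : U (Fin.last d) = V (Fin.last d)) (hrange : ∀ s : S, (∃ i, s = U i) ∨ (∃ j, s = V j))
    (s : S) : (∃ p : Fin d, s = U p.castSucc) ∨ ∃ p : Fin d, s = V p.succ := by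
  obtain ⟨n, rfl⟩ := Nat.exists_eq_succ_of_ne_zero hd
  rcases hrange s with ⟨i, rfl⟩ | ⟨j, rfl⟩
  · rcases i.eq_castSucc_or_eq_last with ⟨p, rfl⟩ | rfl
    · exact .inl ⟨p, rfl⟩
    · exact .inr ⟨Fin.last n, by rw [hUVd, Fin.succ_last]⟩
  · rcases j.eq_zero_or_eq_succ with rfl | ⟨p, rfl⟩
    · exact .inl ⟨0, by rw [Fin.castSucc_zero, hUV0]⟩
    · exact .inr ⟨p, rfl⟩

lemma exists_invariant_edgeDiff_eq [Fintype A] (hd : d ≠ 0)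
    (hU : Function.Injective U) (hV : Function.Injective V)
    (hUV0 : U 0 = V 0) (hUVd : U (Fin.last d) = V (Fin.last d))
    (hdisj : ∀ i j : Fin (d + 1), U i = V j → i = j ∧ (i = 0 ∨ i = Fin.last d))
    (hrange : ∀ s : S, (∃ i, s = U i) ∨ (∃ j, s = V j))
    (hσ1 : ∀ p : Fin d, σ (U p.castSucc) = V (Fin.castSucc (πb (πt.symm p))))
    (hσ2 : ∀ p : Fin d, σ (V p.succ) = U (Fin.succ (πt (πb.symm p))))
    {χ : A → ℝ} (hχ : crossingMatrix πt πb *ᵥ χ = 0) :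
    ∃ g : S → ℝ, (∀ s, g (σ s) = g s) ∧ edgeDiff πt (g ∘ U) = χ := by
  rw [crossingMatrix_mulVec_eq_zero_iff] at hχ
  obtain ⟨g, hgU, hgV⟩ := Function.exists_comp_eq_of_agree hU hV
    (F := fun i => partialSum πt χ i) (G := fun j => partialSum πb χ j) <| by
      rintro i j hij
      obtain ⟨rfl, rfl | rfl⟩ := hdisj i j hij <;> simp [partialSum_self]
  refine ⟨g, fun s => ?_, by simpa [Function.comp_def, hgU] using edgeDiff_partialSum πt χ⟩
  rcases exists_eq_castSucc_or_eq_succ hd hUV0 hUVd hrange s with ⟨p, rfl⟩ | ⟨p, rfl⟩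
  · simpa [hσ1, hgU, hgV] using (hχ (πt.symm p)).symm
  · simp [hσ2, hgU, hgV, partialSum_succ, hχ]

lemma forall_eq_of_edgeDiff_eq_zero {M : Type*} [AddCommGroup M] (hUV0 : U 0 = V 0)
    (hrange : ∀ s : S, (∃ i, s = U i) ∨ (∃ j, s = V j))
    (hσ1 : ∀ p : Fin d, σ (U p.castSucc) = V (Fin.castSucc (πb (πt.symm p))))
    (hσ2 : ∀ p : Fin d, σ (V p.succ) = U (Fin.succ (πt (πb.symm p))))
    {g : S → M} (hg : ∀ s, g (σ s) = g s) (h : edgeDiff πt (g ∘ U) = 0) (s : S) :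
    g s = g (U 0) := by
  have hV : edgeDiff πb (g ∘ V) = 0 := by rwa [← edgeDiff_comp_eq_of_invariant hσ1 hσ2 hg]
  rw [edgeDiff_eq_zero_iff] at h hV
  rcases hrange s with ⟨i, rfl⟩ | ⟨j, rfl⟩
  · exact h i
  · rw [hUV0]; exact hV j

end VertexPermutation

lemma Fin.sum_mul_sub_shift {d : ℕ} (G : Fin (d + 1) → ℝ) (x : Fin d → ℝ) :
    ∑ i : Fin (d + 1), G i *
      ((if h : 0 < (i : ℕ) then x ⟨(i : ℕ) - 1, by have := i.isLt; omega⟩ else 0) -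
        (if h : (i : ℕ) < d then x ⟨(i : ℕ), h⟩ else 0)) =
      ∑ p, x p * (G p.succ - G p.castSucc) := by
  simp only [mul_sub, sum_sub_distrib]
  rw [Fin.sum_univ_succ, Fin.sum_univ_castSucc (f := fun i : Fin (d + 1) => G i * _)]
  simp [mul_comm]

section Boundary

variable {A Cyc : Type*} {d : ℕ} (e : A ≃ Fin d) (γ : Fin (d + 1) → Cyc)

def boundary [DecidableEq Cyc] (χ : A → ℝ) (C : Cyc) : ℝ :=
  ∑ i : Fin (d + 1), if γ i = C then
    ((if h : 0 < (i : ℕ) then χ (e.symm ⟨(i : ℕ) - 1, by have := i.isLt; omega⟩) else 0) -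
      (if h : (i : ℕ) < d then χ (e.symm ⟨(i : ℕ), h⟩) else 0))
  else 0

def coboundary : (Cyc → ℝ) →ₗ[ℝ] (A → ℝ) where
  toFun f := edgeDiff e (f ∘ γ)
  map_add' f g := by
    funext α
    simp only [edgeDiff, Function.comp_apply, Pi.add_apply]
    ring
  map_smul' r f := by
    funext α
    simp only [edgeDiff, Function.comp_apply, Pi.smul_apply, smul_eq_mul, RingHom.id_apply]
    ring

lemma sum_mul_boundary [Fintype A] [Fintype Cyc] [DecidableEq Cyc] (f : Cyc → ℝ) (χ : A → ℝ) :
    ∑ C, f C * boundary e γ χ C = χ ⬝ᵥ coboundary e γ f := by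
  calc ∑ C, f C * boundary e γ χ C
      = ∑ i : Fin (d + 1), f (γ i) *
          ((if h : 0 < (i : ℕ) then χ (e.symm ⟨(i : ℕ) - 1, by have := i.isLt; omega⟩) else 0) -
            (if h : (i : ℕ) < d then χ (e.symm ⟨(i : ℕ), h⟩) else 0)) := by
        simp only [boundary, mul_sum, mul_ite, mul_zero]
        rw [sum_comm]
        simp
    _ = ∑ p, χ (e.symm p) * (f (γ p.succ) - f (γ p.castSucc)) :=
        Fin.sum_mul_sub_shift (f ∘ γ) (χ ∘ e.symm)
    _ = χ ⬝ᵥ coboundary e γ f := by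
        rw [dotProduct, ← e.sum_comp]
        simp [coboundary, edgeDiff]

lemma boundary_eq_zero_iff [Fintype A] [Fintype Cyc] [DecidableEq Cyc] (χ : A → ℝ) :
    boundary e γ χ = 0 ↔ ∀ ψ ∈ LinearMap.range (coboundary e γ), χ ⬝ᵥ ψ = 0 := by
  refine ⟨?_, fun h => ?_⟩
  · rintro h _ ⟨f, rfl⟩
    simp [← sum_mul_boundary, h]
  · rw [← dotProduct_self_eq_zero]
    exact (sum_mul_boundary e γ _ χ).trans (h _ ⟨_, rfl⟩)

end Boundary

section Cycles

variable {A S Cyc : Type*} {d : ℕ} {πt πb : A ≃ Fin d} {U V : Fin (d + 1) → S}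
  {σ : Equiv.Perm S} {c : S → Cyc}

lemma range_coboundary [Fintype A] [Fintype Cyc] (hd : d ≠ 0)
    (hU : Function.Injective U) (hV : Function.Injective V)
    (hUV0 : U 0 = V 0) (hUVd : U (Fin.last d) = V (Fin.last d))
    (hdisj : ∀ i j : Fin (d + 1), U i = V j → i = j ∧ (i = 0 ∨ i = Fin.last d))
    (hrange : ∀ s : S, (∃ i, s = U i) ∨ (∃ j, s = V j))
    (hσ1 : ∀ p : Fin d, σ (U p.castSucc) = V (Fin.castSucc (πb (πt.symm p))))
    (hσ2 : ∀ p : Fin d, σ (V p.succ) = U (Fin.succ (πt (πb.symm p))))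
    (hcinv : ∀ s, c (σ s) = c s) (hcsep : ∀ s t : S, c s = c t → σ.SameCycle s t) :
    LinearMap.range (coboundary πt (c ∘ U)) = LinearMap.ker (crossingMatrix πt πb).mulVecLin := by
  ext ψ
  refine ⟨?_, fun hψ => ?_⟩
  · rintro ⟨f, rfl⟩
    exact crossingMatrix_mulVec_edgeDiff_eq_zero (g := f ∘ c) hUV0 hσ1 hσ2
      fun s => congrArg f (hcinv s)
  · obtain ⟨g, hg, rfl⟩ :=
      exists_invariant_edgeDiff_eq hd hU hV hUV0 hUVd hdisj hrange hσ1 hσ2 hψ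
    obtain ⟨f, rfl⟩ := Equiv.Perm.exists_comp_eq_of_invariant hcsep hg
    exact ⟨f, rfl⟩

lemma ker_coboundary [Fintype Cyc] (hUV0 : U 0 = V 0)
    (hrange : ∀ s : S, (∃ i, s = U i) ∨ (∃ j, s = V j))
    (hσ1 : ∀ p : Fin d, σ (U p.castSucc) = V (Fin.castSucc (πb (πt.symm p))))
    (hσ2 : ∀ p : Fin d, σ (V p.succ) = U (Fin.succ (πt (πb.symm p))))
    (hcinv : ∀ s, c (σ s) = c s) (hcsurj : Function.Surjective c) :
    LinearMap.ker (coboundary πt (c ∘ U)) = ℝ ∙ 1 := by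
  ext f
  rw [LinearMap.mem_ker, Submodule.mem_span_singleton]
  refine ⟨fun hf => ⟨f (c (U 0)), funext fun C => ?_⟩, ?_⟩
  · obtain ⟨s, rfl⟩ := hcsurj C
    simpa using (forall_eq_of_edgeDiff_eq_zero (g := f ∘ c) hUV0 hrange hσ1 hσ2
      (fun s => congrArg f (hcinv s)) hf s).symm
  · rintro ⟨r, rfl⟩
    funext α
    simp [coboundary, edgeDiff]

end Cycles

/-- the kernel of the boundary operator `∂` restricted to
`Γ(T) ≅ ℝ^A` equals the image of the antisymmetric matrix `Ω_π`; consequently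
`dim ker(∂|_{Γ(T)}) = 2g = rank Ω_π` and `d = 2g + s - 1`, i.e.
`rank Ω_π + card Σ = d + 1`.  Set-up as in Statement 14. -/
theorem stmt_15 {A : Type*} [Fintype A]
    (d : ℕ) (hd : 2 ≤ d) (hcard : Fintype.card A = d)
    (πt πb : A ≃ Fin d)
    (Ω : Matrix A A ℝ)
    (hΩ : ∀ α β, Ω α β =
      if πt α < πt β ∧ πb β < πb α then 1
      else if πt β < πt α ∧ πb α < πb β then -1 else 0)
    {S : Type*}
    (U V : Fin (d + 1) → S)
    (hU : Function.Injective U) (hV : Function.Injective V)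
    (hUV0 : U 0 = V 0) (hUVd : U (Fin.last d) = V (Fin.last d))
    (hdisj : ∀ i j : Fin (d + 1), U i = V j → i = j ∧ (i = 0 ∨ i = Fin.last d))
    (hrange : ∀ s : S, (∃ i, s = U i) ∨ (∃ j, s = V j))
    (σ : Equiv.Perm S)
    (hσ1 : ∀ p : Fin d, σ (U p.castSucc) = V (Fin.castSucc (πb (πt.symm p))))
    (hσ2 : ∀ p : Fin d, σ (V p.succ) = U (Fin.succ (πt (πb.symm p))))
    {Cyc : Type*} [Fintype Cyc] [DecidableEq Cyc]
    (c : S → Cyc) (hcsurj : Function.Surjective c)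
    (hcinv : ∀ s, c (σ s) = c s)
    (hcsep : ∀ s t : S, c s = c t → σ.SameCycle s t) :
    (∀ χ : A → ℝ,
      (∀ C : Cyc,
        (∑ i : Fin (d + 1), if c (U i) = C then
          ((if h : 0 < (i : ℕ) then χ (πt.symm ⟨(i : ℕ) - 1, by
              have := i.isLt; omega⟩) else 0) -
           (if h : (i : ℕ) < d then χ (πt.symm ⟨(i : ℕ), h⟩) else 0))
        else 0) = 0)
      ↔ χ ∈ LinearMap.range Ω.mulVecLin) ∧
    Ω.rank + Fintype.card Cyc = d + 1 := by
  obtain rfl : Ω = crossingMatrix πt πb := Matrix.ext hΩ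
  have hrange_eq :=
    range_coboundary (by omega) hU hV hUV0 hUVd hdisj hrange hσ1 hσ2 hcinv hcsep
  refine ⟨fun χ => ?_, ?_⟩
  · calc (∀ C, boundary πt (c ∘ U) χ C = 0)
        ↔ boundary πt (c ∘ U) χ = 0 := (funext_iff (g := (0 : Cyc → ℝ))).symm
      _ ↔ ∀ ψ ∈ LinearMap.ker (crossingMatrix πt πb).mulVecLin, χ ⬝ᵥ ψ = 0 := by
          rw [boundary_eq_zero_iff, hrange_eq]
      _ ↔ _ := by
          rw [mem_range_mulVecLin_iff, crossingMatrix_transpose]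
          simp [neg_mulVec]
  · have : Nonempty Cyc := ⟨c (U 0)⟩
    have hcoboundary := (coboundary πt (c ∘ U)).finrank_range_add_finrank_ker
    rw [hrange_eq, ker_coboundary hUV0 hrange hσ1 hσ2 hcinv hcsurj,
      finrank_span_singleton one_ne_zero, Module.finrank_pi] at hcoboundary
    have hcrossing := (crossingMatrix πt πb).mulVecLin.finrank_range_add_finrank_ker
    rw [Module.finrank_pi, hcard] at hcrossing
    rw [Matrix.rank]
    omega
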